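/- In Ŷ_μ^+ (the abstract algebra on the E-generators with the E-relations), the higher root elements in the associated graded algebra satisfy [Ē_{a,a+2;i,j}^{(r)}, Ē_{a+1,a+3;h,k}^{(s)}] = 0 for all 1 ≤ a ≤ n-3, r,s ≥ 1, 1 ≤ i ≤ μ_a, 1 ≤ h ≤ μ_{a+1}, 1 ≤ j ≤ μ_{a+2}, 1 ≤ k ≤ μ_{a+3}. -/
import Mathlib


noncomputable section

namespace SuperYangian

/-- The sign `(-1)^x` for `x : ZMod 2`. -/
def sgn (x : ZMod 2) : ℂ := if x = 0 then 1 else -1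

variable {A : Type*}

/-- The supercommutator `[x, y] = x*y - ε • (y*x)` with prescribed sign `ε`. -/
def scomm [Ring A] [Algebra ℂ A] (ε : ℂ) (x y : A) : A := x * y - ε • (y * x)

/-- `off μ a = μ 0 + ⋯ + μ (a-1)`. -/
def off (μ : ℕ → ℕ) (a : ℕ) : ℕ := ∑ b ∈ Finset.range a, μ b

/-- The restricted parity `|i|_a` (0-based): the `(off μ a + i)`-th digit of the
01-sequence `p`. -/
def pa (p : ℕ → ZMod 2) (μ : ℕ → ℕ) (a i : ℕ) : ZMod 2 := p (off μ a + i)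

/-- A family `E a i j r` (standing for `E_{a;i,j}^{(r)} = E_{a,a+1;i,j}^{(r)}`,
0-based blocks `a` with `a + 1 < n`, entries `i < μ a`, `j < μ (a+1)`, `r ≥ 1`)
satisfying the `E`-relations (7.7), (7.9), (7.11), (7.13), (7.15) of the parabolic
presentation of the super Yangian; the abstract superalgebra `Ŷ_μ^+` is the
universal example of such a family. -/
structure EAlg (A : Type*) [Ring A] [Algebra ℂ A] (n : ℕ) (μ : ℕ → ℕ)
    (p : ℕ → ZMod 2) where
  E : ℕ → ℕ → ℕ → ℕ → A
  /-- relation (7.7) -/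
  rel_same : ∀ a i h j k r s : ℕ, a + 1 < n →
    i < μ a → h < μ a → j < μ (a + 1) → k < μ (a + 1) → 1 ≤ r → 1 ≤ s →
    scomm (sgn ((pa p μ a i + pa p μ (a + 1) j) * (pa p μ a h + pa p μ (a + 1) k)))
        (E a i j r) (E a h k s) =
      sgn (pa p μ a h * pa p μ (a + 1) j + pa p μ (a + 1) j * pa p μ (a + 1) k +
            pa p μ a h * pa p μ (a + 1) k) •
        ((∑ t ∈ Finset.Ico 1 s, E a i k (r + s - 1 - t) * E a h j t) -
         (∑ t ∈ Finset.Ico 1 r, E a i k (r + s - 1 - t) * E a h j t))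
  /-- relation (7.9) -/
  rel_adj : ∀ a i j h k r s : ℕ, a + 2 < n →
    i < μ a → j < μ (a + 1) → h < μ (a + 1) → k < μ (a + 2) → 1 ≤ r → 1 ≤ s →
    scomm (sgn ((pa p μ a i + pa p μ (a + 1) j) * (pa p μ (a + 1) h + pa p μ (a + 2) k)))
        (E a i j (r + 1)) (E (a + 1) h k s) -
      scomm (sgn ((pa p μ a i + pa p μ (a + 1) j) * (pa p μ (a + 1) h + pa p μ (a + 2) k)))
        (E a i j r) (E (a + 1) h k (s + 1)) =
      sgn (pa p μ (a + 1) j * pa p μ (a + 1) h) •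
        (if h = j then ∑ q ∈ Finset.range (μ (a + 1)), E a i q r * E (a + 1) q k s else 0)
  /-- relation (7.11) -/
  rel_comm : ∀ a b i j h k r s : ℕ, a + 1 < n → b + 1 < n →
    i < μ a → j < μ (a + 1) → h < μ b → k < μ (b + 1) → 1 ≤ r → 1 ≤ s →
    (a + 1 < b ∨ b + 1 < a ∨ (b = a + 1 ∧ h ≠ j)) →
    scomm (sgn ((pa p μ a i + pa p μ (a + 1) j) * (pa p μ b h + pa p μ (b + 1) k)))
      (E a i j r) (E b h k s) = 0
  /-- relation (7.13) -/
  rel_serre : ∀ a b i j h k f g r s ℓ : ℕ, a + 1 < n → b + 1 < n →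
    (b = a + 1 ∨ a = b + 1) →
    i < μ a → j < μ (a + 1) → h < μ a → k < μ (a + 1) → f < μ b → g < μ (b + 1) →
    1 ≤ r → 1 ≤ s → 1 ≤ ℓ →
    scomm (sgn ((pa p μ a i + pa p μ (a + 1) j) *
          (pa p μ a h + pa p μ (a + 1) k + pa p μ b f + pa p μ (b + 1) g)))
        (E a i j r)
        (scomm (sgn ((pa p μ a h + pa p μ (a + 1) k) * (pa p μ b f + pa p μ (b + 1) g)))
          (E a h k s) (E b f g ℓ)) +
      scomm (sgn ((pa p μ a i + pa p μ (a + 1) j) *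
          (pa p μ a h + pa p μ (a + 1) k + pa p μ b f + pa p μ (b + 1) g)))
        (E a i j s)
        (scomm (sgn ((pa p μ a h + pa p μ (a + 1) k) * (pa p μ b f + pa p μ (b + 1) g)))
          (E a h k r) (E b f g ℓ)) = 0
  /-- the super Serre relation (7.15), for `n ≥ 4` -/
  rel_serre2 : ∀ a i f1 f2 j h g1 g2 k r s : ℕ, a + 4 ≤ n →
    i < μ a → f1 < μ (a + 1) → f2 < μ (a + 1) → h < μ (a + 1) →
    g1 < μ (a + 2) → g2 < μ (a + 2) → j < μ (a + 2) → k < μ (a + 3) →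
    1 ≤ r → 1 ≤ s → pa p μ (a + 1) h + pa p μ (a + 2) j = 1 →
    scomm (sgn ((pa p μ a i + pa p μ (a + 1) f1 + pa p μ (a + 1) f2 + pa p μ (a + 2) j) *
          (pa p μ (a + 1) h + pa p μ (a + 2) g1 + pa p μ (a + 2) g2 + pa p μ (a + 3) k)))
      (scomm (sgn ((pa p μ a i + pa p μ (a + 1) f1) *
            (pa p μ (a + 1) f2 + pa p μ (a + 2) j)))
        (E a i f1 r) (E (a + 1) f2 j 1))
      (scomm (sgn ((pa p μ (a + 1) h + pa p μ (a + 2) g1) *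
            (pa p μ (a + 2) g2 + pa p μ (a + 3) k)))
        (E (a + 1) h g1 1) (E (a + 2) g2 k s)) = 0

/-- The higher root element `Ē_{a,b;i,j}^{(r)}` (lifted to the filtered algebra),
defined by induction on the gap via
`Ē_{a,b;i,j}^{(r)} = (-1)^{|0|_{b-1}} [Ē_{a,b-1;i,0}^{(r)}, Ē_{b-1,b;0,j}^{(1)}]`
(by the cited results this is independent of the chosen middle index, here `0`).
The first argument is `b - a - 1`. -/
def EEaux [Ring A] [Algebra ℂ A] (E : ℕ → ℕ → ℕ → ℕ → A) (p : ℕ → ZMod 2)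
    (μ : ℕ → ℕ) (a i : ℕ) : ℕ → ℕ → ℕ → A
  | 0, j, r => E a i j r
  | g + 1, j, r =>
      sgn (pa p μ (a + g + 1) 0) •
        scomm (sgn ((pa p μ a i + pa p μ (a + g + 1) 0) *
            (pa p μ (a + g + 1) 0 + pa p μ (a + g + 2) j)))
          (EEaux E p μ a i g 0 r) (E (a + g + 1) 0 j 1)

/-- The higher root element `Ē_{a,b;i,j}^{(r)}` for `a < b`. -/
def EE [Ring A] [Algebra ℂ A] (E : ℕ → ℕ → ℕ → ℕ → A) (p : ℕ → ZMod 2)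
    (μ : ℕ → ℕ) (a b i j r : ℕ) : A :=
  EEaux E p μ a i (b - a - 1) j r

/-- A generator index `(a, i, j, r)` is valid for `(n, μ)` if `a + 1 < n`,
`i < μ a`, `j < μ (a+1)` and `r ≥ 1`. -/
def Valid (n : ℕ) (μ : ℕ → ℕ) (g : ℕ × ℕ × ℕ × ℕ) : Prop :=
  g.1 + 1 < n ∧ g.2.1 < μ g.1 ∧ g.2.2.1 < μ (g.1 + 1) ∧ 1 ≤ g.2.2.2

/-- The supermonomial in the generators `E` determined by a list of indices. -/
def mono [Ring A] [Algebra ℂ A] (E : ℕ → ℕ → ℕ → ℕ → A)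
    (l : List (ℕ × ℕ × ℕ × ℕ)) : A :=
  (l.map fun g => E g.1 g.2.1 g.2.2.1 g.2.2.2).prod

/-- The span of the supermonomials in the generators of total filtration degree
`< k` (with `deg E_{a;i,j}^{(r)} = r - 1`); membership in `filS E n μ k` expresses
vanishing in the degree-`k` piece of the associated graded algebra. -/
def filS [Ring A] [Algebra ℂ A] (E : ℕ → ℕ → ℕ → ℕ → A) (n : ℕ) (μ : ℕ → ℕ)
    (k : ℕ) : Submodule ℂ A :=
  Submodule.span ℂ {x | ∃ l : List (ℕ × ℕ × ℕ × ℕ),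
    (∀ g ∈ l, Valid n μ g) ∧ (l.map fun g => g.2.2.2 - 1).sum < k ∧ x = mono E l}

/-! ### Auxiliary lemmas -/

section Aux

lemma zmod2_cases (z : ZMod 2) : z = 0 ∨ z = 1 := by revert z; decide

lemma sgn_zero : sgn 0 = 1 := rfl

lemma sgn_one : sgn 1 = -1 := by
  norm_num [sgn, show (1:ZMod 2) ≠ 0 from by decide]

lemma sgn_mul_sgn (x y : ZMod 2) : sgn x * sgn y = sgn (x + y) := by
  rcases zmod2_cases x with h|h <;> rcases zmod2_cases y with h'|h' <;>
    subst h <;> subst h' <;>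
    simp only [show (1+1 : ZMod 2) = 0 from by decide, add_zero, zero_add,
      sgn_zero, sgn_one] <;> norm_num

lemma sgn_sq (x : ZMod 2) : sgn x * sgn x = 1 := by
  rcases zmod2_cases x with h|h <;> subst h <;> simp [sgn_zero, sgn_one]

variable [Ring A] [Algebra ℂ A]

lemma scomm_jacobi (a b c : ℂ) (ha : a * a = 1) (x y z : A) :
    scomm (a*c) x (scomm b y z) =
      scomm (b*c) (scomm a x y) z + a • scomm (a*b) y (scomm c x z) := by
  simp only [scomm, mul_sub, sub_mul, smul_sub, smul_smul, mul_smul_comm,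
    smul_mul_assoc, mul_assoc]
  match_scalars <;> first
    | ring1
    | (ring_nf; rw [pow_two, ha]; ring1)

lemma scomm_zero_right (ε : ℂ) (x : A) : scomm ε x 0 = 0 := by simp [scomm]

lemma scomm_zero_left (ε : ℂ) (x : A) : scomm ε 0 x = 0 := by simp [scomm]

lemma scomm_smul_left (ε c : ℂ) (x y : A) : scomm ε (c • x) y = c • scomm ε x y := by
  simp [scomm, smul_sub, smul_smul, mul_comm]

lemma scomm_smul_right (ε c : ℂ) (x y : A) : scomm ε x (c • y) = c • scomm ε x y := by
  simp [scomm, smul_sub, smul_smul, mul_comm]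

lemma scomm_neg_left (ε : ℂ) (x y : A) : scomm ε (-x) y = -scomm ε x y := by
  simp [scomm, smul_sub]; abel

lemma scomm_neg_right (ε : ℂ) (x y : A) : scomm ε x (-y) = -scomm ε x y := by
  simp [scomm, smul_sub]; abel

lemma scomm_add_right (ε : ℂ) (x y z : A) :
    scomm ε x (y + z) = scomm ε x y + scomm ε x z := by
  simp only [scomm, mul_add, add_mul, smul_add]; abel

lemma scomm_sub_right (ε : ℂ) (x y z : A) :
    scomm ε x (y - z) = scomm ε x y - scomm ε x z := by
  simp only [scomm, mul_sub, sub_mul, smul_sub]; abel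

lemma scomm_flip (ε : ℂ) (hε : ε * ε = 1) (x y : A) :
    scomm ε x y = -(ε • scomm ε y x) := by
  simp [scomm, smul_sub, smul_smul, hε]

lemma scomm_flip_zero {ε : ℂ} (hε : ε * ε = 1) {x y : A} (h : scomm ε x y = 0) :
    scomm ε y x = 0 := by
  have h0 := scomm_flip ε hε y x
  rw [h] at h0
  simpa using h0

lemma smul_comm_mul {c₁ c₂ : ℂ} {x u v : A} (h1 : x*u = c₁ • (u*x)) (h2 : x*v = c₂ • (v*x)) :
    x*(u*v) = (c₁*c₂) • (u*v*x) := by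
  rw [← mul_assoc, h1, smul_mul_assoc, mul_assoc, h2, mul_smul_comm, smul_smul, ← mul_assoc]

lemma scomm_scomm_zero {c₁ c₂ : ℂ} (β : ℂ) {x u v : A}
    (h1 : scomm c₁ x u = 0) (h2 : scomm c₂ x v = 0) :
    scomm (c₁ * c₂) x (scomm β u v) = 0 := by
  have e1 : x * u = c₁ • (u * x) := sub_eq_zero.mp h1
  have e2 : x * v = c₂ • (v * x) := sub_eq_zero.mp h2
  have K1 := smul_comm_mul e1 e2
  have K2 := smul_comm_mul e2 e1
  show x * (u*v - β•(v*u)) - (c₁*c₂) • ((u*v - β•(v*u)) * x) = 0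
  rw [mul_sub, sub_mul, smul_sub, mul_smul_comm, K1, K2, smul_mul_assoc]
  match_scalars <;> ring

lemma half_zero {x : A} (h : x + x = 0) : x = 0 := by
  have h2 : (2:ℂ) • x = 0 := by rw [two_smul]; exact h
  have := congrArg (fun y => (2:ℂ)⁻¹ • y) h2
  simpa [smul_smul] using this

/-! ### The four chain computations (abstract form) -/

lemma chainA (px py pu pv : ZMod 2) (x y u v : A)
    (hyu : scomm (sgn (py*pu)) y u = 0)
    (hyv : scomm (sgn (py*pv)) y v = 0)
    (hxv : scomm (sgn (px*pv)) x v = 0)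
    (hS : scomm (sgn (py*(pu+px))) y (scomm (sgn (pu*px)) u x) = 0) :
    scomm (sgn ((px+py)*(pu+pv))) (scomm (sgn (px*py)) x y) (scomm (sgn (pu*pv)) u v) = 0 := by
  have hbZ : scomm (sgn (py*pu) * sgn (py*pv)) y (scomm (sgn (pu*pv)) u v) = 0 :=
    scomm_scomm_zero _ hyu hyv
  have J2 := scomm_jacobi (sgn (px*pu)) (sgn (pu*pv)) (sgn (px*pv)) (sgn_sq _) x u v
  rw [hxv, scomm_zero_right, smul_zero, add_zero] at J2
  have J1 := scomm_jacobi (sgn (px*py)) (sgn (py*pu) * sgn (py*pv))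
    (sgn (px*pu) * sgn (px*pv)) (sgn_sq _) x y (scomm (sgn (pu*pv)) u v)
  rw [hbZ, scomm_zero_right, J2] at J1
  have hS' : scomm (sgn (py*(pu+px))) y (scomm (sgn (px*pu)) u x) = 0 := by
    rw [show sgn (px*pu) = sgn (pu*px) from congrArg sgn (by ring)]; exact hS
  have hW : scomm (sgn (py*(pu+px))) y (scomm (sgn (px*pu)) x u) = 0 := by
    rw [scomm_flip (sgn (px*pu)) (sgn_sq _) x u, scomm_neg_right, scomm_smul_right,
      hS', smul_zero, neg_zero]
  have J3 := scomm_jacobi (sgn (py*(pu+px))) (sgn (pu*pv) * sgn (px*pv)) (sgn (py*pv))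
    (sgn_sq _) y (scomm (sgn (px*pu)) x u) v
  rw [hyv, scomm_zero_right, smul_zero, add_zero, hW, scomm_zero_left] at J3
  rw [show sgn (px*py) * (sgn (py*pu) * sgn (py*pv)) = sgn (py*(pu+px)) * sgn (py*pv) from by
      rw [sgn_mul_sgn, sgn_mul_sgn, sgn_mul_sgn]; exact congrArg sgn (by ring),
    J3, smul_zero, add_zero] at J1
  rw [show sgn ((px+py)*(pu+pv)) = (sgn (py*pu) * sgn (py*pv)) * (sgn (px*pu) * sgn (px*pv)) from by
      rw [sgn_mul_sgn, sgn_mul_sgn, sgn_mul_sgn]; exact congrArg sgn (by ring)]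
  exact J1.symm

lemma chainB (px py pu pv : ZMod 2) (x y u v : A)
    (hxu : scomm (sgn (px*pu)) x u = 0)
    (hyu : scomm (sgn (py*pu)) y u = 0)
    (hxv : scomm (sgn (px*pv)) x v = 0)
    (hS : scomm (sgn (pu*(py+pv))) u (scomm (sgn (py*pv)) y v) = 0) :
    scomm (sgn ((px+py)*(pu+pv))) (scomm (sgn (px*py)) x y) (scomm (sgn (pu*pv)) u v) = 0 := by
  rw [scomm_flip _ (sgn_sq _)]
  suffices hZ : scomm (sgn ((px+py)*(pu+pv)))
      (scomm (sgn (pu*pv)) u v) (scomm (sgn (px*py)) x y) = 0 by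
    rw [hZ, smul_zero, neg_zero]
  have hcP : scomm (sgn (px*pu) * sgn (py*pu)) u (scomm (sgn (px*py)) x y) = 0 :=
    scomm_scomm_zero _ (scomm_flip_zero (sgn_sq _) hxu) (scomm_flip_zero (sgn_sq _) hyu)
  have J5 := scomm_jacobi (sgn (px*pv)) (sgn (px*py)) (sgn (py*pv)) (sgn_sq _) v x y
  rw [scomm_flip_zero (sgn_sq _) hxv, scomm_zero_left, zero_add] at J5
  have J4 := scomm_jacobi (sgn (pu*pv)) (sgn (px*pv) * sgn (py*pv))
    (sgn (px*pu) * sgn (py*pu)) (sgn_sq _) u v (scomm (sgn (px*py)) x y)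
  rw [hcP, scomm_zero_right, smul_zero, add_zero, J5, scomm_smul_right] at J4
  have hUV : scomm (sgn (pu*(py+pv))) u (scomm (sgn (py*pv)) v y) = 0 := by
    rw [scomm_flip (sgn (py*pv)) (sgn_sq _) v y, scomm_neg_right, scomm_smul_right,
      hS, smul_zero, neg_zero]
  have J6 := scomm_jacobi (sgn (px*pu)) (sgn (px*pv) * sgn (px*py)) (sgn (pu*(py+pv)))
    (sgn_sq _) u x (scomm (sgn (py*pv)) v y)
  rw [scomm_flip_zero (sgn_sq _) hxu, scomm_zero_left, zero_add, hUV, scomm_zero_right,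
    smul_zero] at J6
  rw [show sgn (pu*pv) * (sgn (px*pu) * sgn (py*pu)) = sgn (px*pu) * sgn (pu*(py+pv)) from by
      rw [sgn_mul_sgn, sgn_mul_sgn, sgn_mul_sgn]; exact congrArg sgn (by ring),
    J6, smul_zero] at J4
  rw [show sgn ((px+py)*(pu+pv)) = (sgn (px*pv) * sgn (py*pv)) * (sgn (px*pu) * sgn (py*pu)) from by
      rw [sgn_mul_sgn, sgn_mul_sgn, sgn_mul_sgn]; exact congrArg sgn (by ring)]
  exact J4.symm

lemma chainC (px py pu pv : ZMod 2) (x y u v : A)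
    (hxu : scomm (sgn (px*pu)) x u = 0)
    (hyu : scomm (sgn (py*pu)) y u = 0)
    (hxv : scomm (sgn (px*pv)) x v = 0)
    (hyv : scomm (sgn (py*pv)) y v = 0) :
    scomm (sgn ((px+py)*(pu+pv))) (scomm (sgn (px*py)) x y) (scomm (sgn (pu*pv)) u v) = 0 := by
  have hbZ : scomm (sgn (py*pu) * sgn (py*pv)) y (scomm (sgn (pu*pv)) u v) = 0 :=
    scomm_scomm_zero _ hyu hyv
  have hcZ : scomm (sgn (px*pu) * sgn (px*pv)) x (scomm (sgn (pu*pv)) u v) = 0 :=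
    scomm_scomm_zero _ hxu hxv
  have J := scomm_jacobi (sgn (px*py)) (sgn (py*pu) * sgn (py*pv))
    (sgn (px*pu) * sgn (px*pv)) (sgn_sq _) x y (scomm (sgn (pu*pv)) u v)
  rw [hbZ, hcZ, scomm_zero_right, scomm_zero_right, smul_zero, add_zero] at J
  rw [show sgn ((px+py)*(pu+pv)) = (sgn (py*pu) * sgn (py*pv)) * (sgn (px*pu) * sgn (px*pv)) from by
      rw [sgn_mul_sgn, sgn_mul_sgn, sgn_mul_sgn]; exact congrArg sgn (by ring)]
  exact J.symm

lemma chainD (px pw pv : ZMod 2) (hw : pw = 0) (x w v : A)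
    (hxv : scomm (sgn (px*pv)) x v = 0)
    (hS1 : scomm (sgn (pw*(pw+px))) w (scomm (sgn (pw*px)) w x) = 0)
    (hS2 : scomm (sgn (pw*(pw+pv))) w (scomm (sgn (pw*pv)) w v) = 0) :
    scomm (sgn ((px+pw)*(pw+pv))) (scomm (sgn (px*pw)) x w) (scomm (sgn (pw*pv)) w v) = 0 := by
  subst hw
  simp only [mul_zero, zero_mul, zero_add, add_zero, sgn_zero] at hS1 hS2 ⊢
  have hone : (1:ℂ) * 1 = 1 := by norm_num
  have hP1w : scomm 1 (scomm 1 x w) w = 0 := by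
    rw [scomm_flip (1:ℂ) hone x w, one_smul, scomm_neg_left,
      scomm_flip (1:ℂ) hone (scomm 1 w x) w, one_smul, hS1, neg_zero, neg_zero]
  have J4 := scomm_jacobi (1:ℂ) (1:ℂ) (sgn (px*pv)) hone (scomm (1:ℂ) x w) w v
  rw [hP1w, scomm_zero_left, zero_add, one_smul, one_mul, one_mul] at J4
  have J5 := scomm_jacobi (1:ℂ) (1:ℂ) (sgn (px*pv)) hone x w v
  rw [hxv, scomm_zero_right, smul_zero, add_zero, one_mul] at J5
  have J6 := scomm_jacobi (1:ℂ) (sgn (px*pv)) (1:ℂ) hone w x (scomm (1:ℂ) w v)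
  rw [hS2, scomm_zero_right, smul_zero, add_zero, one_mul, mul_one] at J6
  rw [← J5, J6] at J4
  rw [scomm_flip (1:ℂ) hone w x, one_smul, scomm_neg_left] at J4
  apply half_zero
  nth_rewrite 1 [J4]
  exact neg_add_cancel _

end Aux

/-! ### Filtration lemmas -/

section Fil

variable [Ring A] [Algebra ℂ A] {E : ℕ → ℕ → ℕ → ℕ → A} {n : ℕ} {μ : ℕ → ℕ}

lemma mono_append (l₁ l₂ : List (ℕ × ℕ × ℕ × ℕ)) :
    mono E (l₁ ++ l₂) = mono E l₁ * mono E l₂ := by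
  simp [mono]

lemma E_mem_filS {a i j r : ℕ} (han : a + 1 < n) (hi : i < μ a)
    (hj : j < μ (a+1)) (hr : 1 ≤ r) :
    E a i j r ∈ filS E n μ r := by
  apply Submodule.subset_span
  refine ⟨[(a,i,j,r)], ?_, by simp; omega, by simp [mono]⟩
  intro g hg
  simp only [List.mem_singleton] at hg
  subst hg
  exact ⟨han, hi, hj, hr⟩

lemma filS_mul {x y : A} {k l : ℕ} (hx : x ∈ filS E n μ k) (hy : y ∈ filS E n μ l) :
    x * y ∈ filS E n μ (k + l - 1) := by
  have h := Submodule.mul_mem_mul hx hy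
  simp only [filS] at h ⊢
  rw [Submodule.span_mul_span] at h
  refine Submodule.span_le.mpr ?_ h
  rintro z ⟨z₁, ⟨l₁, hv₁, hd₁, rfl⟩, z₂, ⟨l₂, hv₂, hd₂, rfl⟩, rfl⟩
  apply Submodule.subset_span
  refine ⟨l₁ ++ l₂, ?_, ?_, (mono_append l₁ l₂).symm⟩
  · intro g hg; rcases List.mem_append.mp hg with h|h
    exacts [hv₁ g h, hv₂ g h]
  · simp only [List.map_append, List.sum_append]; omega

lemma filS_scomm {x y : A} {k l : ℕ} (ε : ℂ) (hx : x ∈ filS E n μ k)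
    (hy : y ∈ filS E n μ l) : scomm ε x y ∈ filS E n μ (k + l - 1) := by
  refine sub_mem (filS_mul hx hy) (Submodule.smul_mem _ _ ?_)
  have := filS_mul hy hx
  rwa [Nat.add_comm l k] at this

end Fil

/-! ### The shift identity in the associated graded algebra -/

section Main

variable [Ring A] [Algebra ℂ A] {n : ℕ} {μ : ℕ → ℕ} {p : ℕ → ZMod 2}

lemma shift_mem (X : EAlg A n μ p) {a h k : ℕ} (han : a + 4 ≤ n)
    (hμ2 : 0 < μ (a+2)) (hh : h < μ (a+1)) (hk : k < μ (a+3)) :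
    ∀ d w : ℕ, 1 ≤ w →
      scomm (sgn ((pa p μ (a+1) h + pa p μ (a+2) 0) * (pa p μ (a+2) 0 + pa p μ (a+3) k)))
          (X.E (a+1) h 0 (1+d)) (X.E (a+2) 0 k w) -
        scomm (sgn ((pa p μ (a+1) h + pa p μ (a+2) 0) * (pa p μ (a+2) 0 + pa p μ (a+3) k)))
          (X.E (a+1) h 0 1) (X.E (a+2) 0 k (w+d)) ∈ filS X.E n μ (d + w - 1) := by
  intro d
  induction d with
  | zero => intro w hw; simp
  | succ d ih =>
    intro w hw
    have key : scomm (sgn ((pa p μ (a+1) h + pa p μ (a+2) 0) * (pa p μ (a+2) 0 + pa p μ (a+3) k)))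
          (X.E (a+1) h 0 (1+d+1)) (X.E (a+2) 0 k w) -
        scomm (sgn ((pa p μ (a+1) h + pa p μ (a+2) 0) * (pa p μ (a+2) 0 + pa p μ (a+3) k)))
          (X.E (a+1) h 0 (1+d)) (X.E (a+2) 0 k (w+1)) ∈ filS X.E n μ (d + 1 + w - 1) := by
      have R := X.rel_adj (a+1) h 0 0 k (1+d) w (by omega) hh hμ2 hμ2 hk (by omega) hw
      rw [if_pos rfl] at R
      simp only [show a+1+1 = a+2 from rfl, show a+1+2 = a+3 from rfl] at R
      rw [R]
      apply Submodule.smul_mem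
      apply Submodule.sum_mem
      intro q hq
      simp only [Finset.mem_range] at hq
      have hm := filS_mul (E_mem_filS (E := X.E) (n := n) (μ := μ) (a := a+1) (r := 1+d)
          (by omega) hh hq (by omega))
        (E_mem_filS (E := X.E) (n := n) (μ := μ) (a := a+2) (r := w) (by omega) hq hk hw)
      rwa [show 1 + d + w - 1 = d + 1 + w - 1 from by omega] at hm
    have ih' := ih (w+1) (by omega)
    rw [show d + (w+1) - 1 = d + 1 + w - 1 from by omega] at ih'
    rw [show w + (d+1) = (w+1) + d from by omega]
    rw [← sub_add_sub_cancel _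
      (scomm (sgn ((pa p μ (a+1) h + pa p μ (a+2) 0) * (pa p μ (a+2) 0 + pa p μ (a+3) k)))
        (X.E (a+1) h 0 (1+d)) (X.E (a+2) 0 k (w+1))) _]
    exact add_mem key ih'

/-! ### The key vanishing computation -/

lemma key_zero (X : EAlg A n μ p) (hμ : ∀ b, b < n → 0 < μ b) (a i j h k r s : ℕ)
    (han : a + 4 ≤ n) (hi : i < μ a) (hh : h < μ (a+1)) (hj : j < μ (a+2))
    (hk : k < μ (a+3)) (hr : 1 ≤ r) (hs : 1 ≤ s) :
    scomm (sgn ((pa p μ a i + pa p μ (a+2) j) * (pa p μ (a+1) h + pa p μ (a+3) k)))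
      (scomm (sgn ((pa p μ a i + pa p μ (a+1) 0) * (pa p μ (a+1) 0 + pa p μ (a+2) j)))
        (X.E a i 0 r) (X.E (a+1) 0 j 1))
      (scomm (sgn ((pa p μ (a+1) h + pa p μ (a+2) 0) * (pa p μ (a+2) 0 + pa p μ (a+3) k)))
        (X.E (a+1) h 0 1) (X.E (a+2) 0 k s)) = 0 := by
  have hb : 0 < μ (a+1) := hμ _ (by omega)
  have hd : 0 < μ (a+2) := hμ _ (by omega)
  -- the basic exact vanishing facts
  have hxv : scomm (sgn ((pa p μ a i + pa p μ (a+1) 0) * (pa p μ (a+2) 0 + pa p μ (a+3) k)))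
      (X.E a i 0 r) (X.E (a+2) 0 k s) = 0 :=
    X.rel_comm a (a+2) i 0 0 k r s (by omega) (by omega) hi hb hd hk hr hs (Or.inl (by omega))
  by_cases hh0 : h = 0
  · subst hh0
    by_cases hj0 : j = 0
    · subst hj0
      -- middle indices and parities coincide
      rcases zmod2_cases (pa p μ (a+1) 0 + pa p μ (a+2) 0) with hπ | hπ
      · -- even case: chainD
        have hS1 : scomm (sgn ((pa p μ (a+1) 0 + pa p μ (a+2) 0) *
              ((pa p μ (a+1) 0 + pa p μ (a+2) 0) + (pa p μ a i + pa p μ (a+1) 0))))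
            (X.E (a+1) 0 0 1)
            (scomm (sgn ((pa p μ (a+1) 0 + pa p μ (a+2) 0) * (pa p μ a i + pa p μ (a+1) 0)))
              (X.E (a+1) 0 0 1) (X.E a i 0 r)) = 0 := by
          have T := half_zero (X.rel_serre (a+1) a 0 0 0 0 i 0 1 1 r (by omega) (by omega)
            (Or.inr rfl) hb hd hb hd hi hb le_rfl le_rfl hr)
          rwa [show sgn ((pa p μ (a+1) 0 + pa p μ (a+2) 0) *
              (pa p μ (a+1) 0 + pa p μ (a+2) 0 + pa p μ a i + pa p μ (a+1) 0)) =
            sgn ((pa p μ (a+1) 0 + pa p μ (a+2) 0) *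
              ((pa p μ (a+1) 0 + pa p μ (a+2) 0) + (pa p μ a i + pa p μ (a+1) 0))) from
            congrArg sgn (by ring)] at T
        have hS2 : scomm (sgn ((pa p μ (a+1) 0 + pa p μ (a+2) 0) *
              ((pa p μ (a+1) 0 + pa p μ (a+2) 0) + (pa p μ (a+2) 0 + pa p μ (a+3) k))))
            (X.E (a+1) 0 0 1)
            (scomm (sgn ((pa p μ (a+1) 0 + pa p μ (a+2) 0) * (pa p μ (a+2) 0 + pa p μ (a+3) k)))
              (X.E (a+1) 0 0 1) (X.E (a+2) 0 k s)) = 0 := by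
          have T := half_zero (X.rel_serre (a+1) (a+2) 0 0 0 0 0 k 1 1 s (by omega) (by omega)
            (Or.inl rfl) hb hd hb hd hd hk le_rfl le_rfl hs)
          rwa [show sgn ((pa p μ (a+1) 0 + pa p μ (a+2) 0) *
              (pa p μ (a+1) 0 + pa p μ (a+2) 0 + pa p μ (a+2) 0 + pa p μ (a+3) k)) =
            sgn ((pa p μ (a+1) 0 + pa p μ (a+2) 0) *
              ((pa p μ (a+1) 0 + pa p μ (a+2) 0) + (pa p μ (a+2) 0 + pa p μ (a+3) k))) from
            congrArg sgn (by ring)] at T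
        have C := chainD (pa p μ a i + pa p μ (a+1) 0) (pa p μ (a+1) 0 + pa p μ (a+2) 0)
          (pa p μ (a+2) 0 + pa p μ (a+3) k) hπ (X.E a i 0 r) (X.E (a+1) 0 0 1)
          (X.E (a+2) 0 k s) hxv hS1 hS2
        rwa [show sgn (((pa p μ a i + pa p μ (a+1) 0) + (pa p μ (a+1) 0 + pa p μ (a+2) 0)) *
            ((pa p μ (a+1) 0 + pa p μ (a+2) 0) + (pa p μ (a+2) 0 + pa p μ (a+3) k))) =
          sgn ((pa p μ a i + pa p μ (a+2) 0) * (pa p μ (a+1) 0 + pa p μ (a+3) k)) from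
          congrArg sgn ((by decide :
            ∀ A B D K : ZMod 2, ((A+B)+(B+D))*((B+D)+(D+K)) = (A+D)*(B+K)) _ _ _ _)] at C
      · -- odd case: the super Serre relation (7.15)
        have S := X.rel_serre2 a i 0 0 0 0 0 0 k r s han hi hb hb hb hd hd hd hk hr hs hπ
        rwa [show sgn ((pa p μ a i + pa p μ (a+1) 0 + pa p μ (a+1) 0 + pa p μ (a+2) 0) *
            (pa p μ (a+1) 0 + pa p μ (a+2) 0 + pa p μ (a+2) 0 + pa p μ (a+3) k)) =
          sgn ((pa p μ a i + pa p μ (a+2) 0) * (pa p μ (a+1) 0 + pa p μ (a+3) k)) from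
          congrArg sgn ((by decide :
            ∀ A B D K : ZMod 2, (A+B+B+D)*(B+D+D+K) = (A+D)*(B+K)) _ _ _ _)] at S
    · -- h = 0, j ≠ 0 : chainA
      have hyu : scomm (sgn ((pa p μ (a+1) 0 + pa p μ (a+2) j) *
            (pa p μ (a+1) 0 + pa p μ (a+2) 0)))
          (X.E (a+1) 0 j 1) (X.E (a+1) 0 0 1) = 0 := by
        have T := X.rel_same (a+1) 0 0 j 0 1 1 (by omega) hb hb hj hd le_rfl le_rfl
        simpa using T
      have hyv : scomm (sgn ((pa p μ (a+1) 0 + pa p μ (a+2) j) *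
            (pa p μ (a+2) 0 + pa p μ (a+3) k)))
          (X.E (a+1) 0 j 1) (X.E (a+2) 0 k s) = 0 :=
        X.rel_comm (a+1) (a+2) 0 j 0 k 1 s (by omega) (by omega) hb hj hd hk le_rfl hs
          (Or.inr (Or.inr ⟨rfl, fun hc => hj0 hc.symm⟩))
      have hS : scomm (sgn ((pa p μ (a+1) 0 + pa p μ (a+2) j) *
            ((pa p μ (a+1) 0 + pa p μ (a+2) 0) + (pa p μ a i + pa p μ (a+1) 0))))
          (X.E (a+1) 0 j 1)
          (scomm (sgn ((pa p μ (a+1) 0 + pa p μ (a+2) 0) * (pa p μ a i + pa p μ (a+1) 0)))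
            (X.E (a+1) 0 0 1) (X.E a i 0 r)) = 0 := by
        have T := half_zero (X.rel_serre (a+1) a 0 j 0 0 i 0 1 1 r (by omega) (by omega)
          (Or.inr rfl) hb hj hb hd hi hb le_rfl le_rfl hr)
        rwa [show sgn ((pa p μ (a+1) 0 + pa p μ (a+2) j) *
            (pa p μ (a+1) 0 + pa p μ (a+2) 0 + pa p μ a i + pa p μ (a+1) 0)) =
          sgn ((pa p μ (a+1) 0 + pa p μ (a+2) j) *
            ((pa p μ (a+1) 0 + pa p μ (a+2) 0) + (pa p μ a i + pa p μ (a+1) 0))) from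
          congrArg sgn (by ring)] at T
      have C := chainA (pa p μ a i + pa p μ (a+1) 0) (pa p μ (a+1) 0 + pa p μ (a+2) j)
        (pa p μ (a+1) 0 + pa p μ (a+2) 0) (pa p μ (a+2) 0 + pa p μ (a+3) k)
        (X.E a i 0 r) (X.E (a+1) 0 j 1) (X.E (a+1) 0 0 1) (X.E (a+2) 0 k s)
        hyu hyv hxv hS
      rwa [show sgn (((pa p μ a i + pa p μ (a+1) 0) + (pa p μ (a+1) 0 + pa p μ (a+2) j)) *
          ((pa p μ (a+1) 0 + pa p μ (a+2) 0) + (pa p μ (a+2) 0 + pa p μ (a+3) k))) =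
        sgn ((pa p μ a i + pa p μ (a+2) j) * (pa p μ (a+1) 0 + pa p μ (a+3) k)) from
        congrArg sgn ((by decide :
          ∀ A B D J K : ZMod 2, ((A+B)+(B+J))*((B+D)+(D+K)) = (A+J)*(B+K)) _ _ _ _ _)] at C
  · by_cases hj0 : j = 0
    · subst hj0
      -- h ≠ 0, j = 0 : chainB
      have hxu : scomm (sgn ((pa p μ a i + pa p μ (a+1) 0) *
            (pa p μ (a+1) h + pa p μ (a+2) 0)))
          (X.E a i 0 r) (X.E (a+1) h 0 1) = 0 :=
        X.rel_comm a (a+1) i 0 h 0 r 1 (by omega) (by omega) hi hb hh hd hr le_rfl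
          (Or.inr (Or.inr ⟨rfl, hh0⟩))
      have hyu : scomm (sgn ((pa p μ (a+1) 0 + pa p μ (a+2) 0) *
            (pa p μ (a+1) h + pa p μ (a+2) 0)))
          (X.E (a+1) 0 0 1) (X.E (a+1) h 0 1) = 0 := by
        have T := X.rel_same (a+1) 0 h 0 0 1 1 (by omega) hb hh hd hd le_rfl le_rfl
        simpa using T
      have hS : scomm (sgn ((pa p μ (a+1) h + pa p μ (a+2) 0) *
            ((pa p μ (a+1) 0 + pa p μ (a+2) 0) + (pa p μ (a+2) 0 + pa p μ (a+3) k))))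
          (X.E (a+1) h 0 1)
          (scomm (sgn ((pa p μ (a+1) 0 + pa p μ (a+2) 0) * (pa p μ (a+2) 0 + pa p μ (a+3) k)))
            (X.E (a+1) 0 0 1) (X.E (a+2) 0 k s)) = 0 := by
        have T := half_zero (X.rel_serre (a+1) (a+2) h 0 0 0 0 k 1 1 s (by omega) (by omega)
          (Or.inl rfl) hh hd hb hd hd hk le_rfl le_rfl hs)
        rwa [show sgn ((pa p μ (a+1) h + pa p μ (a+2) 0) *
            (pa p μ (a+1) 0 + pa p μ (a+2) 0 + pa p μ (a+2) 0 + pa p μ (a+3) k)) =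
          sgn ((pa p μ (a+1) h + pa p μ (a+2) 0) *
            ((pa p μ (a+1) 0 + pa p μ (a+2) 0) + (pa p μ (a+2) 0 + pa p μ (a+3) k))) from
          congrArg sgn (by ring)] at T
      have C := chainB (pa p μ a i + pa p μ (a+1) 0) (pa p μ (a+1) 0 + pa p μ (a+2) 0)
        (pa p μ (a+1) h + pa p μ (a+2) 0) (pa p μ (a+2) 0 + pa p μ (a+3) k)
        (X.E a i 0 r) (X.E (a+1) 0 0 1) (X.E (a+1) h 0 1) (X.E (a+2) 0 k s)
        hxu hyu hxv hS
      rwa [show sgn (((pa p μ a i + pa p μ (a+1) 0) + (pa p μ (a+1) 0 + pa p μ (a+2) 0)) *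
          ((pa p μ (a+1) h + pa p μ (a+2) 0) + (pa p μ (a+2) 0 + pa p μ (a+3) k))) =
        sgn ((pa p μ a i + pa p μ (a+2) 0) * (pa p μ (a+1) h + pa p μ (a+3) k)) from
        congrArg sgn ((by decide :
          ∀ A B C D K : ZMod 2, ((A+B)+(B+D))*((C+D)+(D+K)) = (A+D)*(C+K)) _ _ _ _ _)] at C
    · -- h ≠ 0, j ≠ 0 : chainC
      have hxu : scomm (sgn ((pa p μ a i + pa p μ (a+1) 0) *
            (pa p μ (a+1) h + pa p μ (a+2) 0)))
          (X.E a i 0 r) (X.E (a+1) h 0 1) = 0 :=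
        X.rel_comm a (a+1) i 0 h 0 r 1 (by omega) (by omega) hi hb hh hd hr le_rfl
          (Or.inr (Or.inr ⟨rfl, hh0⟩))
      have hyu : scomm (sgn ((pa p μ (a+1) 0 + pa p μ (a+2) j) *
            (pa p μ (a+1) h + pa p μ (a+2) 0)))
          (X.E (a+1) 0 j 1) (X.E (a+1) h 0 1) = 0 := by
        have T := X.rel_same (a+1) 0 h j 0 1 1 (by omega) hb hh hj hd le_rfl le_rfl
        simpa using T
      have hyv : scomm (sgn ((pa p μ (a+1) 0 + pa p μ (a+2) j) *
            (pa p μ (a+2) 0 + pa p μ (a+3) k)))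
          (X.E (a+1) 0 j 1) (X.E (a+2) 0 k s) = 0 :=
        X.rel_comm (a+1) (a+2) 0 j 0 k 1 s (by omega) (by omega) hb hj hd hk le_rfl hs
          (Or.inr (Or.inr ⟨rfl, fun hc => hj0 hc.symm⟩))
      have C := chainC (pa p μ a i + pa p μ (a+1) 0) (pa p μ (a+1) 0 + pa p μ (a+2) j)
        (pa p μ (a+1) h + pa p μ (a+2) 0) (pa p μ (a+2) 0 + pa p μ (a+3) k)
        (X.E a i 0 r) (X.E (a+1) 0 j 1) (X.E (a+1) h 0 1) (X.E (a+2) 0 k s)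
        hxu hyu hxv hyv
      rwa [show sgn (((pa p μ a i + pa p μ (a+1) 0) + (pa p μ (a+1) 0 + pa p μ (a+2) j)) *
          ((pa p μ (a+1) h + pa p μ (a+2) 0) + (pa p μ (a+2) 0 + pa p μ (a+3) k))) =
        sgn ((pa p μ a i + pa p μ (a+2) j) * (pa p μ (a+1) h + pa p μ (a+3) k)) from
        congrArg sgn ((by decide :
          ∀ A B C D J K : ZMod 2, ((A+B)+(B+J))*((C+D)+(D+K)) = (A+J)*(C+K)) _ _ _ _ _ _)] at C

end Main

/-- In the associated graded algebra of `Ŷ_μ^+`, the higher root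
elements satisfy `[Ē_{a,a+2;i,j}^{(r)}, Ē_{a+1,a+3;h,k}^{(s)}] = 0` for all
`0 ≤ a ≤ n - 4` (0-based), `r, s ≥ 1` and all admissible indices.  This is stated in
the filtered algebra: the supercommutator, which is homogeneous of degree
`r + s - 2`, lies in the span of the supermonomials of degree `< r + s - 2`. -/
theorem statement18 [Ring A] [Algebra ℂ A] {n : ℕ} {μ : ℕ → ℕ} {p : ℕ → ZMod 2}
    (X : EAlg A n μ p) (hμ : ∀ a, a < n → 0 < μ a) :
    ∀ a i j h k r s : ℕ, a + 4 ≤ n →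
      i < μ a → h < μ (a + 1) → j < μ (a + 2) → k < μ (a + 3) → 1 ≤ r → 1 ≤ s →
      scomm (sgn ((pa p μ a i + pa p μ (a + 2) j) * (pa p μ (a + 1) h + pa p μ (a + 3) k)))
          (EE X.E p μ a (a + 2) i j r) (EE X.E p μ (a + 1) (a + 3) h k s) ∈
        filS X.E n μ (r + s - 2) := by
  intro a i j h k r s han hi hh hj hk hr hs
  have hb : 0 < μ (a+1) := hμ _ (by omega)
  have hd : 0 < μ (a+2) := hμ _ (by omega)
  have e1 : EE X.E p μ a (a+2) i j r = sgn (pa p μ (a+1) 0) •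
      scomm (sgn ((pa p μ a i + pa p μ (a+1) 0) * (pa p μ (a+1) 0 + pa p μ (a+2) j)))
        (X.E a i 0 r) (X.E (a+1) 0 j 1) := by
    unfold EE
    rw [show a + 2 - a - 1 = 1 from by omega]
    rfl
  have e2 : EE X.E p μ (a+1) (a+3) h k s = sgn (pa p μ (a+2) 0) •
      scomm (sgn ((pa p μ (a+1) h + pa p μ (a+2) 0) * (pa p μ (a+2) 0 + pa p μ (a+3) k)))
        (X.E (a+1) h 0 s) (X.E (a+2) 0 k 1) := by
    unfold EE
    rw [show a + 3 - (a+1) - 1 = 1 from by omega]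
    rfl
  rw [e1, e2, scomm_smul_left, scomm_smul_right]
  apply Submodule.smul_mem
  apply Submodule.smul_mem
  have hshift := shift_mem X han hd hh hk (s-1) 1 le_rfl
  rw [show 1 + (s-1) = s from by omega,
    show s - 1 + 1 - 1 = s - 1 from by omega] at hshift
  rw [show scomm (sgn ((pa p μ (a+1) h + pa p μ (a+2) 0) * (pa p μ (a+2) 0 + pa p μ (a+3) k)))
        (X.E (a+1) h 0 s) (X.E (a+2) 0 k 1) =
      scomm (sgn ((pa p μ (a+1) h + pa p μ (a+2) 0) * (pa p μ (a+2) 0 + pa p μ (a+3) k)))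
        (X.E (a+1) h 0 1) (X.E (a+2) 0 k s) +
      (scomm (sgn ((pa p μ (a+1) h + pa p μ (a+2) 0) * (pa p μ (a+2) 0 + pa p μ (a+3) k)))
        (X.E (a+1) h 0 s) (X.E (a+2) 0 k 1) -
       scomm (sgn ((pa p μ (a+1) h + pa p μ (a+2) 0) * (pa p μ (a+2) 0 + pa p μ (a+3) k)))
        (X.E (a+1) h 0 1) (X.E (a+2) 0 k s)) from by abel]
  rw [scomm_add_right]
  apply add_mem
  · rw [key_zero X hμ a i j h k r s han hi hh hj hk hr hs]
    exact zero_mem _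
  · have hP : scomm (sgn ((pa p μ a i + pa p μ (a+1) 0) * (pa p μ (a+1) 0 + pa p μ (a+2) j)))
        (X.E a i 0 r) (X.E (a+1) 0 j 1) ∈ filS X.E n μ r := by
      have := filS_scomm (E := X.E)
        (sgn ((pa p μ a i + pa p μ (a+1) 0) * (pa p μ (a+1) 0 + pa p μ (a+2) j)))
        (E_mem_filS (E := X.E) (n := n) (μ := μ) (a := a) (by omega) hi hb hr)
        (E_mem_filS (E := X.E) (n := n) (μ := μ) (a := a+1) (by omega) hb hj le_rfl)
      rwa [show r + 1 - 1 = r from by omega] at this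
    have hmem := filS_scomm
      (sgn ((pa p μ a i + pa p μ (a+2) j) * (pa p μ (a+1) h + pa p μ (a+3) k))) hP hshift
    rwa [show r + (s-1) - 1 = r + s - 2 from by omega] at hmem

end SuperYangian
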